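/- In the expansion BD^{→,⊥,∘} of Belnap–Dunn logic, the formula ∘p is logically equivalent (hence synonymous) to ((p ∧ ¬p) → ⊥) ∧ ¬((p ∨ ¬p) → ⊥): for every valuation ν in the matrix M^{BD,→,⊥,∘}, these two formulas receive the same value. Consequently the classicality connective ∘ is definable in BD^{→,⊥,∘} in terms of {¬, ∧, ∨, →, ⊥}. -/
import Mathlib


namespace BD10

/-- The four truth values of Belnap-Dunn logic:
`t` (true), `f` (false), `b` (both true and false), `n` (neither true nor false). -/
inductive V4 : Type
  | t | f | b | n
deriving DecidableEq, Repr

namespace V4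

/-- `a` lies above truth in the Belnap-Dunn bilattice (i.e. `a ∈ {t, b}`). -/
def hasT : V4 → Bool
  | t => true
  | b => true
  | _ => false

/-- `a` lies above falsity in the Belnap-Dunn bilattice (i.e. `a ∈ {f, b}`). -/
def hasF : V4 → Bool
  | f => true
  | b => true
  | _ => false

def ofTF : Bool → Bool → V4
  | true, true => b
  | true, false => t
  | false, true => f
  | false, false => n

/-- Interpretation of ¬: swaps `t` and `f`, fixes `b` and `n`. -/
def neg4 : V4 → V4
  | t => f
  | f => t
  | b => b
  | n => n

/-- Interpretation of ∧: greatest lower bound in the lattice order on `V4`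
with `f` least, `t` greatest, `b` and `n` incomparable. -/
def and4 (x y : V4) : V4 := ofTF (x.hasT && y.hasT) (x.hasF || y.hasF)

/-- Interpretation of ∨: least upper bound in the lattice order on `V4`
with `f` least, `t` greatest, `b` and `n` incomparable. -/
def or4 (x y : V4) : V4 := ofTF (x.hasT || y.hasT) (x.hasF && y.hasF)

/-- Interpretation of →: `a₁ → a₂ = t` if `a₁ ∉ {t, b}`, and `a₂` otherwise. -/
def imp4 (x y : V4) : V4 := if x = t ∨ x = b then y else t

/-- The designated truth values: `t` and `b`. -/
def desig (x : V4) : Prop := x = t ∨ x = b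

end V4

/-- Interpretation of the classicality connective ∘:
`∘(a) = t` if `a ∈ {t, f}` and `f` otherwise. -/
def circV (a : V4) : V4 := if a = V4.t ∨ a = V4.f then V4.t else V4.f

/-- Formulas of the expansion BD^{→,⊥,∘} of Belnap-Dunn logic. -/
inductive Fm : Type
  | var : ℕ → Fm
  | neg : Fm → Fm
  | and : Fm → Fm → Fm
  | or : Fm → Fm → Fm
  | imp : Fm → Fm → Fm
  | bot : Fm
  | circ : Fm → Fm
deriving DecidableEq

/-- The valuation in the matrix `M^{BD,→,⊥,∘}` determined by an assignment of
truth values to the propositional variables. -/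
def val (v : ℕ → V4) : Fm → V4
  | .var p => v p
  | .neg A => V4.neg4 (val v A)
  | .and A B => V4.and4 (val v A) (val v B)
  | .or A B => V4.or4 (val v A) (val v B)
  | .imp A B => V4.imp4 (val v A) (val v B)
  | .bot => V4.f
  | .circ A => circV (val v A)

/-- A formula contains only the connectives ¬, ∧, ∨, →, ⊥ (i.e. no ∘). -/
def OnlyClassical : Fm → Prop
  | .var _ => True
  | .neg A => OnlyClassical A
  | .and A B => OnlyClassical A ∧ OnlyClassical B
  | .or A B => OnlyClassical A ∧ OnlyClassical B
  | .imp A B => OnlyClassical A ∧ OnlyClassical B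
  | .bot => True
  | .circ _ => False

/-- in BD^{→,⊥,∘}, `∘p` is logically equivalent (hence
synonymous) to `((p ∧ ¬p) → ⊥) ∧ ¬((p ∨ ¬p) → ⊥)`; consequently the
classicality connective ∘ is definable in BD^{→,⊥,∘} in terms of
{¬, ∧, ∨, →, ⊥}. -/
theorem stmt10 :
    (∀ (p : ℕ) (v : ℕ → V4),
        val v (Fm.circ (Fm.var p)) =
          val v (Fm.and
            (Fm.imp (Fm.and (Fm.var p) (Fm.neg (Fm.var p))) Fm.bot)
            (Fm.neg (Fm.imp (Fm.or (Fm.var p) (Fm.neg (Fm.var p))) Fm.bot)))) ∧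
    (∃ (p : ℕ) (A : Fm), OnlyClassical A ∧
        ∀ v : ℕ → V4, val v (Fm.circ (Fm.var p)) = val v A) := by
  constructor
  · intro p v
    cases h : v p <;> simp [val, circV, V4.neg4, V4.and4, V4.or4, V4.imp4, V4.ofTF, V4.hasT, V4.hasF, h]
  · refine ⟨0, Fm.and
      (Fm.imp (Fm.and (Fm.var 0) (Fm.neg (Fm.var 0))) Fm.bot)
      (Fm.neg (Fm.imp (Fm.or (Fm.var 0) (Fm.neg (Fm.var 0))) Fm.bot)), ?_, ?_⟩
    · simp [OnlyClassical]
    · intro v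
      cases h : v 0 <;> simp [val, circV, V4.neg4, V4.and4, V4.or4, V4.imp4, V4.ofTF, V4.hasT, V4.hasF, h]

end BD10
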